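/- Let H be self-adjoint with ground state energy E₀, and let b_t(η) = e^{itH} e^{−itH₀} (b(e^{−itE_M}η)) e^{itH₀} e^{−itH} where b is a bounded fermionic annihilation operator with ‖b(ξ)‖ ≤ ‖ξ‖. Suppose the asymptotic field b_∞(η) = s-lim_{t→∞} b_t(η) exists on D(H). If Ψ_E is an eigenvector of H and |⟨e^{−itE_M}η, ξ⟩| → 0 as t → ∞ for all ξ in a dense set (so that ‖b(e^{−itE_M}η)Φ‖ → 0 for Φ in a core), then b_∞(η)Ψ_E = 0. -/

import Mathlib

open Filter
open scoped Topology

/-!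
Since `Ψ_E` is an eigenvector, `e^{-itH} Ψ_E` is `Ψ_E` up to a phase, so
`‖b_t(η) Ψ_E‖ = ‖b(e^{-itE_M}η) Ψ_E‖`. The free-evolved operators are uniformly bounded, hence
equicontinuous, so their decay on the dense core extends to `Ψ_E`, and the limit `L` has norm `0`.
-/

theorem ContinuousLinearMap.tendsto_apply_zero_of_dense {ι 𝕜 E F : Type*}
    [NontriviallyNormedField 𝕜] [SeminormedAddCommGroup E] [NormedSpace 𝕜 E]
    [SeminormedAddCommGroup F] [NormedSpace 𝕜 F] {l : Filter ι} (B : ι → E →L[𝕜] F) {C : ℝ}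
    (hB : ∀ i, ‖B i‖ ≤ C) {D : Set E} (hD : Dense D)
    (hdecay : ∀ y ∈ D, Tendsto (fun i => B i y) l (𝓝 0)) (x : E) :
    Tendsto (fun i => B i x) l (𝓝 0) := by
  have hequi : Equicontinuous ((↑) ∘ B : ι → E → F) :=
    ((NormedSpace.equicontinuous_TFAE B).out 5 1).mp (⟨C, hB⟩ : ∃ C, ∀ i, ‖B i‖ ≤ C)
  have hclosed : IsClosed {x | Tendsto (fun i => B i x) l (𝓝 0)} :=
    hequi.isClosed_setOfPred_tendsto (f := fun _ => (0 : F)) continuous_const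
  exact hclosed.closure_subset_iff.mpr hdecay (hD x)

theorem LinearIsometryEquiv.norm_apply_symm_of_apply_eq_smul {𝕜 E F : Type*}
    [NormedField 𝕜] [SeminormedAddCommGroup E] [NormedSpace 𝕜 E] [SeminormedAddCommGroup F]
    [NormedSpace 𝕜 F] (U : E ≃ₗᵢ[𝕜] E) (B : E →L[𝕜] F) {c : 𝕜} (hc : ‖c‖ = 1) {ψ : E}
    (hψ : U ψ = c • ψ) : ‖B (U.symm ψ)‖ = ‖B ψ‖ := by
  have hc₀ : c ≠ 0 := norm_ne_zero_iff.mp (hc ▸ one_ne_zero)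
  have hsymm : U.symm ψ = c⁻¹ • ψ := by
    rw [U.symm_apply_eq, map_smul, hψ, smul_smul, inv_mul_cancel₀ hc₀, one_smul]
  rw [hsymm, B.map_smul, norm_smul, norm_inv, hc, inv_one, one_mul]

theorem stmt_16_general {E : Type*} [NormedAddCommGroup E] [InnerProductSpace ℂ E]
    (U : ℝ → (E ≃ₗᵢ[ℂ] E)) (bfree : ℝ → (E →L[ℂ] E)) (C : ℝ)
    (hbound : ∀ t, ‖bfree t‖ ≤ C)
    (D : Set E) (hD : Dense D)
    (hdecay : ∀ Φ ∈ D, Tendsto (fun t => ‖bfree t Φ‖) atTop (𝓝 0))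
    (ΨE : E) (En : ℝ)
    (heig : ∀ t, U t ΨE = Complex.exp (Complex.I * t * En) • ΨE)
    (L : E)
    (hlim : Tendsto (fun t => U t (bfree t ((U t).symm ΨE))) atTop (𝓝 L)) :
    L = 0 := by
  have hphase (t : ℝ) : ‖Complex.exp (Complex.I * t * En)‖ = 1 := by
    simpa only [Complex.ofReal_mul, mul_assoc] using Complex.norm_exp_I_mul_ofReal (t * En)
  have hfree : Tendsto (fun t => bfree t ΨE) atTop (𝓝 0) :=
    ContinuousLinearMap.tendsto_apply_zero_of_dense bfree hbound hD
      (fun Φ hΦ => tendsto_zero_iff_norm_tendsto_zero.mpr (hdecay Φ hΦ)) ΨE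
  have hnorm (t : ℝ) : ‖U t (bfree t ((U t).symm ΨE))‖ = ‖bfree t ΨE‖ := by
    rw [LinearIsometryEquiv.norm_map,
      (U t).norm_apply_symm_of_apply_eq_smul (bfree t) (hphase t) (heig t)]
  have hzero : Tendsto (fun t => U t (bfree t ((U t).symm ΨE))) atTop (𝓝 0) := by
    rw [tendsto_zero_iff_norm_tendsto_zero, funext hnorm]
    exact tendsto_zero_iff_norm_tendsto_zero.mp hfree
  exact tendsto_nhds_unique hlim hzero

/-- Asymptotic annihilation fields vanish on eigenvectors: let
`b_t(η) = e^{itH} b(e^{−itE_M}η) e^{−itH}` (here `U t = e^{itH}` is the unitary group and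
`bfree t = b(e^{−itE_M}η)` the free-evolved annihilation operator, uniformly bounded by
`C = ‖η‖`).  Suppose `‖bfree t Φ‖ → 0` for all `Φ` in a dense core (the non-stationary
phase decay `|⟨e^{−itE_M}η, ξ⟩| → 0`), `Ψ_E` is an eigenvector of `H` with eigenvalue
`En` (so `U t Ψ_E = e^{itEn} Ψ_E`), and the asymptotic field
`b_∞(η)Ψ_E = s-lim_{t→∞} b_t(η)Ψ_E` exists and equals `L`.  Then `L = 0`. -/
theorem stmt_16 {E : Type*} [NormedAddCommGroup E] [InnerProductSpace ℂ E] [CompleteSpace E]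
    (U : ℝ → (E ≃ₗᵢ[ℂ] E)) (bfree : ℝ → (E →L[ℂ] E)) (C : ℝ)
    (hbound : ∀ t, ‖bfree t‖ ≤ C)
    (D : Set E) (hD : Dense D)
    (hdecay : ∀ Φ ∈ D, Tendsto (fun t => ‖bfree t Φ‖) atTop (𝓝 0))
    (ΨE : E) (En : ℝ)
    (heig : ∀ t, U t ΨE = Complex.exp (Complex.I * t * En) • ΨE)
    (L : E)
    (hlim : Tendsto (fun t => U t (bfree t ((U t).symm ΨE))) atTop (𝓝 L)) :
    L = 0 :=
  stmt_16_general U bfree C hbound D hD hdecay ΨE En heig L hlim
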